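/- arXiv:1204.0817 — 2 statements merged into one kernel-verified Lean document; each statement's English description precedes it below -/
import Mathlib

section
/- If i_1, i_2, …, i_m is a height-monotone sequence of integers, then the total length of the path, namely Σ_{j=1}^{m-1} |i_{j+1} − i_j|, is at most 2·|i_2 − i_1| (at most twice the length of the first step), and hence at most 2·2^{height(i_1)}. -/
/-! Consecutive terms have heights `h_j > h_{j+1}`, so the step `i_{j+1} - i_j` has height exactly
`h_{j+1}`: it is a nonzero multiple of `2^{h_{j+1}}`. Being also shorter than `2^{h_j}`, a multiple
of `2^{h_{j+1}}`, it is at most `2^{h_j} - 2^{h_{j+1}}`. These bounds telescope, so the steps after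
the first sum to less than `2^{h_1}`, which in turn is at most the first step. -/

/-- `HasHeight x h` : the 2-adic valuation of `x` is exactly `h`,
i.e. `x = (2k+1)·2^h` for some integer `k`. -/
def HasHeight (x : ℤ) (h : ℕ) : Prop := ∃ k : ℤ, x = (2 * k + 1) * 2 ^ h

/-- A sequence `i 0, …, i (m-1)` of integers with heights `h 0, …, h (m-1)` is
height-monotone: heights are exact, strictly decreasing, and each step is
shorter than `2^(current height)`. -/
def HeightMonotone (m : ℕ) (i : ℕ → ℤ) (h : ℕ → ℕ) : Prop :=
  (∀ j < m, HasHeight (i j) (h j)) ∧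
  (∀ j, j + 1 < m → h (j + 1) < h j) ∧
  (∀ j, j + 1 < m → |i (j + 1) - i j| < 2 ^ (h j))

namespace HasHeight

variable {x y : ℤ} {a b : ℕ}

theorem sub_of_lt (hx : HasHeight x a) (hy : HasHeight y b) (hba : b < a) :
    HasHeight (y - x) b := by
  obtain ⟨k, rfl⟩ := hx
  obtain ⟨l, rfl⟩ := hy
  obtain ⟨d, rfl⟩ := Nat.exists_eq_add_of_lt hba
  exact ⟨l - (2 * k + 1) * 2 ^ d, by ring⟩

theorem two_pow_dvd (hx : HasHeight x b) : (2 : ℤ) ^ b ∣ x := by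
  obtain ⟨k, rfl⟩ := hx
  exact Dvd.intro_left _ rfl

theorem ne_zero (hx : HasHeight x b) : x ≠ 0 := by
  obtain ⟨k, rfl⟩ := hx
  exact mul_ne_zero (by omega) (by positivity)

theorem two_pow_le_abs (hx : HasHeight x b) : (2 : ℤ) ^ b ≤ |x| :=
  Int.le_of_dvd (abs_pos.2 hx.ne_zero) ((dvd_abs _ _).2 hx.two_pow_dvd)

end HasHeight

namespace HeightMonotone

variable {m : ℕ} {i : ℕ → ℤ} {h : ℕ → ℕ}

theorem hasHeight_step (hHM : HeightMonotone m i h) {j : ℕ} (hj : j + 1 < m) :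
    HasHeight (i (j + 1) - i j) (h (j + 1)) :=
  (hHM.1 j (by omega)).sub_of_lt (hHM.1 (j + 1) hj) (hHM.2.1 j hj)

theorem abs_step_le (hHM : HeightMonotone m i h) {j : ℕ} (hj : j + 1 < m) :
    |i (j + 1) - i j| ≤ 2 ^ h j - 2 ^ h (j + 1) := by
  have hdvd : (2 : ℤ) ^ h (j + 1) ∣ 2 ^ h j - |i (j + 1) - i j| :=
    dvd_sub (pow_dvd_pow 2 (hHM.2.1 j hj).le) ((dvd_abs _ _).2 (hHM.hasHeight_step hj).two_pow_dvd)
  have := (Int.le_add_iff_lt_of_dvd_sub (by positivity) hdvd).2 (hHM.2.2 j hj)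
  linarith

theorem length_le (hHM : HeightMonotone m i h) :
    ∑ j ∈ Finset.range (m - 1), |i (j + 1) - i j| ≤ 2 ^ h 0 - 2 ^ h (m - 1) := by
  calc ∑ j ∈ Finset.range (m - 1), |i (j + 1) - i j|
      ≤ ∑ j ∈ Finset.range (m - 1), ((2 : ℤ) ^ h j - 2 ^ h (j + 1)) :=
        Finset.sum_le_sum fun j hj ↦ hHM.abs_step_le (by have := Finset.mem_range.1 hj; omega)
    _ = 2 ^ h 0 - 2 ^ h (m - 1) := Finset.sum_range_sub' (fun j ↦ (2 : ℤ) ^ h j) (m - 1)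

theorem tail (hHM : HeightMonotone (m + 1) i h) :
    HeightMonotone m (fun j ↦ i (j + 1)) (fun j ↦ h (j + 1)) :=
  ⟨fun j hj ↦ hHM.1 (j + 1) (by omega), fun j hj ↦ hHM.2.1 (j + 1) (by omega),
    fun j hj ↦ hHM.2.2 (j + 1) (by omega)⟩

end HeightMonotone

theorem heightMonotone_length_le_general (m : ℕ) (i : ℕ → ℤ) (h : ℕ → ℕ)
    (hHM : HeightMonotone m i h) :
    (∑ j ∈ Finset.range (m - 1), |i (j + 1) - i j|) ≤ 2 * |i 1 - i 0| ∧
    (∑ j ∈ Finset.range (m - 1), |i (j + 1) - i j|) ≤ 2 * 2 ^ (h 0) := by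
  obtain hm | ⟨n, rfl⟩ : m < 2 ∨ ∃ n, m = n + 2 :=
    (Nat.lt_or_ge m 2).imp_right fun hm ↦ ⟨m - 2, by omega⟩
  · rw [show m - 1 = 0 by omega, Finset.sum_range_zero]
    exact ⟨by positivity, by positivity⟩
  have hfirst_ge : (2 : ℤ) ^ h 1 ≤ |i 1 - i 0| :=
    (hHM.hasHeight_step (j := 0) (by omega)).two_pow_le_abs
  have hfirst_lt : |i 1 - i 0| < 2 ^ h 0 := hHM.2.2 0 (by omega)
  have hrest := hHM.tail.length_le
  simp only [Nat.add_sub_cancel, zero_add] at hrest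
  rw [show n + 2 - 1 = n + 1 by omega, Finset.sum_range_succ']
  have hlast_pos : (0 : ℤ) < 2 ^ h (n + 1) := by positivity
  constructor <;> linarith

/-- The total length of a height-monotone sequence is at most twice the length
of its first step, hence at most `2 · 2^(height i₁)`. -/
theorem heightMonotone_length_le (m : ℕ) (hm : 2 ≤ m) (i : ℕ → ℤ) (h : ℕ → ℕ)
    (hHM : HeightMonotone m i h) :
    (∑ j ∈ Finset.range (m - 1), |i (j + 1) - i j|) ≤ 2 * |i 1 - i 0| ∧
    (∑ j ∈ Finset.range (m - 1), |i (j + 1) - i j|) ≤ 2 * 2 ^ (h 0) :=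
  heightMonotone_length_le_general m i h hHM
end

section
/- If a translation-invariant random closed set E in the plane has edge-intensity ℓ (mean length per unit area), then for any r > 0 the probability that E intersects the circle of radius r centered at the origin is at most 4rℓ; consequently, for any random network that connects every point of a rate-1 Poisson process (since a Poisson point inside disc(0,r) forces a crossing of circle(0,r)), ℓ ≥ sup_{r>0} (1 − e^{−π r²})/(4r). -/
open MeasureTheory

/-- For a translation-invariant random network of edge-intensity `ℓ`, the mean
number `N r` of crossings of the circle of radius `r` is `4rℓ`; hence the
probability that the network meets the circle is at most `4rℓ`.  Since a rate-1
Poisson point inside the disc forces such a crossing, which happens with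
probability `1 − e^{−πr²}`, we get `ℓ ≥ (1 − e^{−πr²})/(4r)` for every `r > 0`. -/
theorem intensity_lower_bound
    {Ω : Type*} [MeasurableSpace Ω] (P : Measure Ω) [IsProbabilityMeasure P]
    (ℓ : ℝ) (N : ℝ → Ω → ℕ) (hit : ℝ → Set Ω)
    (hNint : ∀ r : ℝ, 0 < r → Integrable (fun ω => (N r ω : ℝ)) P)
    (hmean : ∀ r : ℝ, 0 < r → ∫ ω, (N r ω : ℝ) ∂P = 4 * r * ℓ)
    (hmeas : ∀ r : ℝ, 0 < r → MeasurableSet (hit r))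
    (hsub : ∀ r : ℝ, 0 < r → hit r ⊆ {ω | 1 ≤ N r ω})
    (hPoisson : ∀ r : ℝ, 0 < r →
      1 - Real.exp (-(Real.pi * r ^ 2)) ≤ (P (hit r)).toReal) :
    (∀ r : ℝ, 0 < r → (P (hit r)).toReal ≤ 4 * r * ℓ) ∧
    (∀ r : ℝ, 0 < r → (1 - Real.exp (-(Real.pi * r ^ 2))) / (4 * r) ≤ ℓ) := by
  have key : ∀ r : ℝ, 0 < r → (P (hit r)).toReal ≤ 4 * r * ℓ := by
    intro r hr
    have hind : Integrable ((hit r).indicator (fun _ => (1 : ℝ))) P := by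
      exact (integrable_const 1).indicator (hmeas r hr)
    have hle : ∀ ω, (hit r).indicator (fun _ => (1 : ℝ)) ω ≤ (N r ω : ℝ) := by
      intro ω
      by_cases h : ω ∈ hit r
      · simp only [Set.indicator_of_mem h]
        exact_mod_cast hsub r hr h
      · simp [Set.indicator_of_notMem h]
    calc (P (hit r)).toReal = ∫ ω, (hit r).indicator (fun _ => (1 : ℝ)) ω ∂P := by
          rw [integral_indicator (hmeas r hr)]
          simp [measure_lt_top, Measure.real]
      _ ≤ ∫ ω, (N r ω : ℝ) ∂P := integral_mono hind (hNint r hr) hle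
      _ = 4 * r * ℓ := hmean r hr
  refine ⟨key, fun r hr => ?_⟩
  have h := (hPoisson r hr).trans (key r hr)
  rw [div_le_iff₀ (by linarith)]
  linarith
end
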